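/- Discrete Noether theorem: let L be a local Lagrangian on k-cochains of a finite complex M, φ a field on shell (stationary for the action εL[φ]), and Δ a k-cochain. Then L is invariant under the infinitesimal transformation Δ (i.e. (d/dt)L[φ+tΔ]|_{t=0} = 0 as a function on vertices) if and only if the current j[φ] := (∂L[φ]/∂(δφ)) ⌢ Δ satisfies ∂j[φ] = 0. -/

import Mathlib

open Finset

/- Faces of the grid `I^d_N` are encoded by their doubled centers: a face is a
function `f : Fin d → ℕ` (with `f m ≤ 2N` for faces of the grid), whose odd
coordinates are the directions spanned by the face; its dimension is the number
of odd coordinates.  Vertices have all coordinates even. -/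

/-- The set of directions spanned by a face (its odd coordinates). -/
def oddSet (d : ℕ) (f : Fin d → ℕ) : Finset (Fin d) :=
  Finset.univ.filter (fun m => Odd (f m))

/-- The coorientation sign of a face `f` and its facet in direction `l`
(the paper's outer-normal-first convention for the lexicographic ordering):
`(−1)^{#{m < l : f m odd}}`. -/
def csgn (d : ℕ) (f : Fin d → ℕ) (l : Fin d) : ℤ :=
  (-1) ^ (Finset.univ.filter (fun m => m < l ∧ Odd (f m))).card

/-- The upper neighbour of `f` in direction `l`. -/
def fup (d : ℕ) (f : Fin d → ℕ) (l : Fin d) : Fin d → ℕ := Function.update f l (f l + 1)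

/-- The lower neighbour of `f` in direction `l`. -/
def fdn (d : ℕ) (f : Fin d → ℕ) (l : Fin d) : Fin d → ℕ := Function.update f l (f l - 1)

/-- The coboundary `δ` of a cochain: for a `(k+1)`-face `g`,
`[δφ](g) = Σ_{l : g l odd} ±(φ(g_{l↦g l+1}) − φ(g_{l↦g l−1}))`, the signed sum
of `φ` over the facets of `g`. -/
def cDelta {V : Type*} [AddCommGroup V] (d : ℕ) (φ : (Fin d → ℕ) → V) :
    (Fin d → ℕ) → V :=
  fun g => ∑ l : Fin d,
    if Odd (g l) then csgn d g l • (φ (fup d g l) - φ (fdn d g l)) else 0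

/-- The boundary `∂` of a cochain on the grid `I^d_N` (dual to `δ`): for a
`(k−1)`-face `v`, the signed sum of `φ` over the `k`-faces of the grid
containing `v`. -/
def cBdry {V : Type*} [AddCommGroup V] (d N : ℕ) (φ : (Fin d → ℕ) → V) :
    (Fin d → ℕ) → V :=
  fun v => ∑ l : Fin d,
    if Even (v l) then
      csgn d v l • ((if 0 < v l then φ (fdn d v l) else 0)
        - (if v l < 2 * N then φ (fup d v l) else 0))
    else 0
/- The (real-valued) cap-product: for a face `g = b…c` and a set `T` of
directions in which `g` can be extended downwards (`g m` even and positive), we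
get the face `a…c ⊇ g` spanning the directions of `g` together with `T`, and
the face `a…b` spanning the directions `T`; then
`[φ⌢ψ](b…c) = Σ_a ⟨a,b,c⟩ φ(a…c) ψ(a…b)`.
At a vertex `v` this specializes to `[φ⌢ψ](v) = Σ_{f : max f = v} φ(f) ψ(f)`,
the cap-product of cochains of equal dimension. -/

/-- The sign `⟨a,b,c⟩` for the extension of `g = b…c` by the directions `T`. -/
def capSg (d : ℕ) (g : Fin d → ℕ) (T : Finset (Fin d)) : ℤ :=
  (-1) ^ ((T ×ˢ oddSet d g).filter (fun p => p.2 < p.1)).card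

/-- The face `a…c` obtained by extending `g = b…c` downwards in directions `T`. -/
def bigFace (d : ℕ) (g : Fin d → ℕ) (T : Finset (Fin d)) : Fin d → ℕ :=
  fun m => if m ∈ T then g m - 1 else g m

/-- The face `a…b`, where `a = min (a…c)` and `b = min (b…c)`. -/
def lowFace (d : ℕ) (g : Fin d → ℕ) (T : Finset (Fin d)) : Fin d → ℕ :=
  fun m => if m ∈ T ∨ m ∈ oddSet d g then g m - 1 else g m

/-- The cap-product `[φ⌢ψ](b…c) = Σ_a ⟨a,b,c⟩ φ(a…c) ψ(a…b)` of real-valued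
cochains. -/
def capR (d : ℕ) (φ ψ : (Fin d → ℕ) → ℝ) : (Fin d → ℕ) → ℝ :=
  fun g => ∑ T : Finset (Fin d),
    if ∀ m ∈ T, Even (g m) ∧ 0 < g m then
      (capSg d g T : ℝ) * (φ (bigFace d g T) * ψ (lowFace d g T))
    else 0

/-- A face of the grid `I^d_N` (all doubled coordinates at most `2N`). -/
def inGrid (d N : ℕ) (f : Fin d → ℕ) : Prop := ∀ m, f m ≤ 2 * N

/-- A vertex of the grid `I^d_N` (all doubled coordinates even, at most `2N`). -/
def isVertex (d N : ℕ) (v : Fin d → ℕ) : Prop := ∀ m, Even (v m) ∧ v m ≤ 2 * N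


/-! Summation by parts (`∂` is adjoint to `δ` on the grid) turns stationarity of the action
into the Euler–Lagrange equations `∂L/∂φ + ∂(∂L/∂(δφ)) = 0` on every face of the grid.
At a vertex, the Leibniz rule `∂(α ⌢ β) = (-1)^k (∂α ⌢ β - α ⌢ δβ)` for a `(k+1)`-cochain `α`
then rewrites `∂j[φ]` as `(-1)^(k+1) ((∂L/∂φ) ⌢ Δ + (∂L/∂(δφ)) ⌢ δΔ)`, which is
`(-1)^(k+1) (d/dt) L[φ+tΔ]|₀`. -/

section Faces

variable {d : ℕ}

lemma mem_oddSet {f : Fin d → ℕ} {m : Fin d} : m ∈ oddSet d f ↔ Odd (f m) := by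
  simp [oddSet]

lemma fdn_apply (f : Fin d → ℕ) (l m : Fin d) :
    fdn d f l m = if m = l then f l - 1 else f m :=
  Function.update_apply f l (f l - 1) m

lemma fup_apply (f : Fin d → ℕ) (l m : Fin d) :
    fup d f l m = if m = l then f l + 1 else f m :=
  Function.update_apply f l (f l + 1) m

lemma fdn_fup (f : Fin d → ℕ) (l : Fin d) : fdn d (fup d f l) l = f := by
  funext m; simp only [fdn_apply, fup_apply]; split_ifs with h <;> simp [h]

lemma fup_fdn {f : Fin d → ℕ} {l : Fin d} (hl : 0 < f l) : fup d (fdn d f l) l = f := by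
  funext m; simp only [fdn_apply, fup_apply]; split_ifs with h <;> simp [h]; omega

lemma csgn_congr {f g : Fin d → ℕ} {l : Fin d} (h : ∀ m < l, f m = g m) :
    csgn d f l = csgn d g l := by
  unfold csgn
  congr 2
  exact filter_congr fun m _ => and_congr_right fun hm => by rw [h m hm]

lemma csgn_fup (f : Fin d → ℕ) (l : Fin d) : csgn d (fup d f l) l = csgn d f l :=
  csgn_congr fun m hm => by rw [fup_apply, if_neg hm.ne]

lemma csgn_fdn (f : Fin d → ℕ) (l : Fin d) : csgn d (fdn d f l) l = csgn d f l :=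
  csgn_congr fun m hm => by rw [fdn_apply, if_neg hm.ne]

lemma lowFace_eq_bigFace (g : Fin d → ℕ) (T : Finset (Fin d)) :
    lowFace d g T = bigFace d g (T ∪ oddSet d g) := by
  funext m; simp [lowFace, bigFace]

lemma bigFace_empty (g : Fin d → ℕ) : bigFace d g ∅ = g := by
  funext m; simp [bigFace]

lemma bigFace_fdn (g : Fin d → ℕ) (l : Fin d) (T : Finset (Fin d)) :
    bigFace d (fdn d g l) T = fdn d (bigFace d g T) l := by
  funext m; simp only [bigFace, fdn_apply]; split_ifs <;> simp_all

lemma bigFace_fup {g : Fin d → ℕ} {l : Fin d} {T : Finset (Fin d)} (hl : l ∉ T) :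
    bigFace d (fup d g l) T = fup d (bigFace d g T) l := by
  funext m; simp only [bigFace, fup_apply]; split_ifs <;> simp_all

lemma bigFace_fup_insert {g : Fin d → ℕ} {l : Fin d} {T : Finset (Fin d)} (hl : l ∉ T) :
    bigFace d (fup d g l) (insert l T) = bigFace d g T := by
  funext m; simp only [bigFace, fup_apply, mem_insert]; split_ifs <;> simp_all

lemma fdn_bigFace {g : Fin d → ℕ} {l : Fin d} {T : Finset (Fin d)} (hl : l ∉ T) :
    fdn d (bigFace d g T) l = bigFace d g (insert l T) := by
  funext m; simp only [bigFace, fdn_apply, mem_insert]; split_ifs <;> simp_all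

lemma fup_bigFace_insert {g : Fin d → ℕ} {l : Fin d} {T : Finset (Fin d)} (hl : l ∉ T)
    (hg : 0 < g l) : fup d (bigFace d g (insert l T)) l = bigFace d g T := by
  rw [← fdn_bigFace hl, fup_fdn]; simpa [bigFace, hl] using hg

lemma oddSet_bigFace {v : Fin d → ℕ} (hv : ∀ m, Even (v m)) {T : Finset (Fin d)}
    (hT : ∀ m ∈ T, 0 < v m) : oddSet d (bigFace d v T) = T := by
  ext m
  have := hv m
  by_cases hm : m ∈ T
  · have := hT m hm; simp only [mem_oddSet, bigFace, hm, if_true, iff_true]; grind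
  · simp only [mem_oddSet, bigFace, hm, if_false, iff_false]; grind

lemma oddSet_fup_bigFace {v : Fin d → ℕ} (hv : ∀ m, Even (v m)) {T : Finset (Fin d)}
    (hT : ∀ m ∈ T, 0 < v m) {l : Fin d} (hl : l ∉ T) :
    oddSet d (fup d (bigFace d v T) l) = insert l T := by
  have hodd : ∀ m, Odd (bigFace d v T m) ↔ m ∈ T := fun m => by
    rw [← mem_oddSet, oddSet_bigFace hv hT]
  ext m
  rw [mem_oddSet, fup_apply, mem_insert]
  split_ifs with h
  · subst h; simp [Nat.odd_add_one, hodd, hl]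
  · simp [hodd, h]

lemma csgn_bigFace {v : Fin d → ℕ} (hv : ∀ m, Even (v m)) {T : Finset (Fin d)}
    (hT : ∀ m ∈ T, 0 < v m) (l : Fin d) :
    (csgn d (bigFace d v T) l : ℝ) = (-1) ^ #(T.filter (· < l)) := by
  have : univ.filter (fun m => m < l ∧ Odd (bigFace d v T m)) = T.filter (· < l) := by
    ext m; simp [← mem_oddSet (f := bigFace d v T), oddSet_bigFace hv hT, and_comm]
  simp [csgn, this]

lemma csgn_of_even {v : Fin d → ℕ} (hv : ∀ m, Even (v m)) (l : Fin d) : csgn d v l = 1 := by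
  simpa [bigFace_empty] using csgn_bigFace hv (T := ∅) (by simp) l

end Faces

section CapProduct

variable {d : ℕ}

lemma capR_eq_sum_of_even (α β : (Fin d → ℕ) → ℝ) {v : Fin d → ℕ} (hv : ∀ m, Even (v m)) :
    capR d α β v = ∑ T : Finset (Fin d),
      if ∀ m ∈ T, 0 < v m then α (bigFace d v T) * β (bigFace d v T) else 0 := by
  have hodd : oddSet d v = ∅ := by
    ext m; simpa [mem_oddSet] using hv m
  refine sum_congr rfl fun T _ => ?_
  simp [capSg, lowFace_eq_bigFace, hodd, hv]

lemma capR_eq_sum_of_oddSet_eq_singleton (α β : (Fin d → ℕ) → ℝ) {e : Fin d → ℕ} {l : Fin d}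
    (he : oddSet d e = {l}) :
    capR d α β e = ∑ T : Finset (Fin d),
      if l ∉ T ∧ ∀ m ∈ T, 0 < e m then
        (-1) ^ #(T.filter (l < ·)) * (α (bigFace d e T) * β (bigFace d e (insert l T)))
      else 0 := by
  have heven : ∀ m, Even (e m) ↔ m ≠ l := fun m => by
    rw [← Nat.not_odd_iff_even, ← mem_oddSet, he, mem_singleton]
  refine sum_congr rfl fun T _ => ?_
  have hcond : (∀ m ∈ T, Even (e m) ∧ 0 < e m) ↔ l ∉ T ∧ ∀ m ∈ T, 0 < e m := by
    simp only [heven]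
    exact ⟨fun h => ⟨fun hl => (h l hl).1 rfl, fun m hm => (h m hm).2⟩,
      fun h m hm => ⟨fun hml => h.1 (hml ▸ hm), h.2 m hm⟩⟩
  have hsg : (capSg d e T : ℝ) = (-1) ^ #(T.filter (l < ·)) := by
    have : (T ×ˢ oddSet d e).filter (fun p => p.2 < p.1) = T.filter (l < ·) ×ˢ {l} := by
      ext ⟨a, b⟩; simp only [mem_filter, mem_product, he, mem_singleton]; grind
    simp [capSg, this]
  simp only [hcond, hsg, lowFace_eq_bigFace, he, union_singleton]

lemma oddSet_fdn {v : Fin d → ℕ} (hv : ∀ m, Even (v m)) {l : Fin d} (hl : 0 < v l) :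
    oddSet d (fdn d v l) = {l} := by
  have h := fdn_bigFace (g := v) (notMem_empty l)
  rw [bigFace_empty] at h
  rw [h, oddSet_bigFace hv (by simpa using hl)]
  rfl

lemma oddSet_fup {v : Fin d → ℕ} (hv : ∀ m, Even (v m)) (l : Fin d) :
    oddSet d (fup d v l) = {l} := by
  simpa [bigFace_empty] using oddSet_fup_bigFace hv (T := ∅) (by simp) (notMem_empty l)

lemma forall_mem_pos_fdn {v : Fin d → ℕ} {l : Fin d} {T : Finset (Fin d)} (hl : l ∉ T) :
    (∀ m ∈ T, 0 < fdn d v l m) ↔ ∀ m ∈ T, 0 < v m :=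
  forall₂_congr fun m hm => by rw [fdn_apply, if_neg (ne_of_mem_of_not_mem hm hl)]

lemma forall_mem_pos_fup {v : Fin d → ℕ} {l : Fin d} {T : Finset (Fin d)} (hl : l ∉ T) :
    (∀ m ∈ T, 0 < fup d v l m) ↔ ∀ m ∈ T, 0 < v m :=
  forall₂_congr fun m hm => by rw [fup_apply, if_neg (ne_of_mem_of_not_mem hm hl)]

lemma ite_capR_fdn_eq_sum (α β : (Fin d → ℕ) → ℝ) {v : Fin d → ℕ} (hv : ∀ m, Even (v m))
    (l : Fin d) :
    (if 0 < v l then capR d α β (fdn d v l) else 0) = ∑ T : Finset (Fin d),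
      if l ∉ T ∧ ∀ m ∈ T, 0 < v m then
        (-1) ^ #(T.filter (l < ·)) * ((if 0 < v l then α (bigFace d v (insert l T)) else 0)
          * β (fdn d (bigFace d v (insert l T)) l))
      else 0 := by
  split_ifs with hl
  · rw [capR_eq_sum_of_oddSet_eq_singleton α β (oddSet_fdn hv hl)]
    refine sum_congr rfl fun T _ => ?_
    by_cases hlT : l ∉ T
    · simp only [forall_mem_pos_fdn hlT, bigFace_fdn, fdn_bigFace hlT]
    · simp [hlT]
  · simp

lemma ite_capR_fup_eq_sum (α β : (Fin d → ℕ) → ℝ) {v : Fin d → ℕ} (hv : ∀ m, Even (v m))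
    (N : ℕ) (l : Fin d) :
    (if v l < 2 * N then capR d α β (fup d v l) else 0) = ∑ T : Finset (Fin d),
      if l ∉ T ∧ ∀ m ∈ T, 0 < v m then
        (-1) ^ #(T.filter (l < ·)) * ((if v l < 2 * N then α (fup d (bigFace d v T) l) else 0)
          * β (bigFace d v T))
      else 0 := by
  split_ifs with hl
  · rw [capR_eq_sum_of_oddSet_eq_singleton α β (oddSet_fup hv l)]
    refine sum_congr rfl fun T _ => ?_
    by_cases hlT : l ∉ T
    · simp only [forall_mem_pos_fup hlT, bigFace_fup hlT, bigFace_fup_insert hlT]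
    · simp [hlT]
  · simp

end CapProduct

lemma neg_one_pow_card_filter_gt {α : Type*} [LinearOrder α] {T : Finset α} {l : α}
    (hl : l ∉ T) :
    (-1 : ℝ) ^ #(T.filter (l < ·)) = (-1) ^ #T * (-1) ^ #(T.filter (· < l)) := by
  have hcard : #(T.filter (l < ·)) + #(T.filter (· < l)) = #T := by
    rw [← card_filter_add_card_filter_not (s := T) (l < ·)]
    congr 2
    exact filter_congr fun t ht => by
      rw [not_lt, le_iff_lt_or_eq, or_iff_left (ne_of_mem_of_not_mem ht hl)]
  rw [← hcard, pow_add, mul_assoc, ← pow_add, ← two_mul, pow_mul]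
  norm_num

lemma sum_ite_mem_eq_sum_insert {α M : Type*} [Fintype α] [DecidableEq α] [AddCommMonoid M]
    (g : Finset α → M) (l : α) :
    ∑ S : Finset α, (if l ∈ S then g S else 0)
      = ∑ T : Finset α, (if l ∉ T then g (insert l T) else 0) := by
  rw [← sum_filter, ← sum_filter]
  refine sum_nbij' (·.erase l) (insert l) ?_ ?_ ?_ ?_ ?_ <;> intro S hS <;>
    simp only [mem_filter, mem_univ, true_and] at hS
  · simp
  · simp
  · exact insert_erase hS
  · exact erase_insert hS
  · rw [insert_erase hS]

section Leibniz

variable {d : ℕ}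

lemma cBdry_bigFace_eq_sum (N : ℕ) (α : (Fin d → ℕ) → ℝ) {v : Fin d → ℕ} (hv : ∀ m, Even (v m))
    {T : Finset (Fin d)} (hT : ∀ m ∈ T, 0 < v m) :
    cBdry d N α (bigFace d v T) = ∑ l : Fin d,
      if l ∉ T then
        (-1) ^ #(T.filter (· < l)) * ((if 0 < v l then α (bigFace d v (insert l T)) else 0)
          - (if v l < 2 * N then α (fup d (bigFace d v T) l) else 0))
      else 0 := by
  refine sum_congr rfl fun l _ => ?_
  have heven : Even (bigFace d v T l) ↔ l ∉ T := by
    rw [← Nat.not_odd_iff_even, ← mem_oddSet, oddSet_bigFace hv hT]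
  by_cases hl : l ∈ T
  · simp [heven, hl]
  · have hvl : bigFace d v T l = v l := by simp [bigFace, hl]
    rw [if_pos (heven.2 hl), if_pos hl, zsmul_eq_mul, csgn_bigFace hv hT, fdn_bigFace hl, hvl]

lemma cDelta_bigFace_eq_sum (β : (Fin d → ℕ) → ℝ) {v : Fin d → ℕ} (hv : ∀ m, Even (v m))
    {S : Finset (Fin d)} (hS : ∀ m ∈ S, 0 < v m) :
    cDelta d β (bigFace d v S) = ∑ l : Fin d,
      if l ∈ S then
        (-1) ^ #(S.filter (· < l)) *
          (β (fup d (bigFace d v S) l) - β (fdn d (bigFace d v S) l))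
      else 0 := by
  have hodd : ∀ l, Odd (bigFace d v S l) ↔ l ∈ S := fun l => by
    rw [← mem_oddSet, oddSet_bigFace hv hS]
  simp only [cDelta, hodd, zsmul_eq_mul, csgn_bigFace hv hS]

lemma cBdry_capR_eq_sum (N : ℕ) (α β : (Fin d → ℕ) → ℝ) {v : Fin d → ℕ}
    (hv : ∀ m, Even (v m)) :
    cBdry d N (capR d α β) v = ∑ l : Fin d, ∑ T : Finset (Fin d),
      if l ∉ T ∧ ∀ m ∈ T, 0 < v m then
        (-1) ^ #(T.filter (l < ·)) *
          ((if 0 < v l then α (bigFace d v (insert l T)) else 0)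
              * β (fdn d (bigFace d v (insert l T)) l)
            - (if v l < 2 * N then α (fup d (bigFace d v T) l) else 0) * β (bigFace d v T))
      else 0 := by
  refine sum_congr rfl fun l _ => ?_
  rw [if_pos (hv l), csgn_of_even hv, one_smul, ite_capR_fdn_eq_sum α β hv,
    ite_capR_fup_eq_sum α β hv, ← sum_sub_distrib]
  refine sum_congr rfl fun T _ => ?_
  rw [ite_sub_ite, sub_zero, mul_sub]

lemma capR_cBdry_eq_sum (N : ℕ) (α β : (Fin d → ℕ) → ℝ) {v : Fin d → ℕ}
    (hv : ∀ m, Even (v m)) :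
    capR d (cBdry d N α) β v = ∑ l : Fin d, ∑ T : Finset (Fin d),
      if l ∉ T ∧ ∀ m ∈ T, 0 < v m then
        (-1) ^ #(T.filter (· < l)) *
          ((if 0 < v l then α (bigFace d v (insert l T)) else 0)
            - (if v l < 2 * N then α (fup d (bigFace d v T) l) else 0)) * β (bigFace d v T)
      else 0 := by
  rw [capR_eq_sum_of_even _ _ hv, sum_comm]
  refine sum_congr rfl fun T _ => ?_
  by_cases hT : ∀ m ∈ T, 0 < v m
  · rw [if_pos hT, cBdry_bigFace_eq_sum N α hv hT, sum_mul]
    exact sum_congr rfl fun l _ => by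
      rw [ite_mul, zero_mul]; simp only [and_iff_left hT]
  · simp [hT]

lemma capR_cDelta_eq_sum (α β : (Fin d → ℕ) → ℝ) {v : Fin d → ℕ} (hv : ∀ m, Even (v m)) :
    capR d α (cDelta d β) v = ∑ l : Fin d, ∑ T : Finset (Fin d),
      if l ∉ T ∧ ∀ m ∈ T, 0 < v m then
        (-1) ^ #(T.filter (· < l)) * (if 0 < v l then α (bigFace d v (insert l T)) else 0)
          * (β (bigFace d v T) - β (fdn d (bigFace d v (insert l T)) l))
      else 0 := by
  have hexpand : ∀ S : Finset (Fin d),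
      (if ∀ m ∈ S, 0 < v m then α (bigFace d v S) * cDelta d β (bigFace d v S) else 0)
        = ∑ l : Fin d, if l ∈ S then
            (if ∀ m ∈ S, 0 < v m then (-1) ^ #(S.filter (· < l)) * α (bigFace d v S)
              * (β (fup d (bigFace d v S) l) - β (fdn d (bigFace d v S) l)) else 0)
          else 0 := fun S => by
    split_ifs with hS
    · rw [cDelta_bigFace_eq_sum β hv hS, mul_sum]
      exact sum_congr rfl fun l _ => by split_ifs <;> ring
    · simp
  rw [capR_eq_sum_of_even _ _ hv, sum_congr rfl fun S _ => hexpand S, sum_comm]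
  refine sum_congr rfl fun l _ => ?_
  rw [sum_ite_mem_eq_sum_insert]
  refine sum_congr rfl fun T _ => ?_
  by_cases hl : l ∈ T
  · simp [hl]
  have hsgn : #((insert l T).filter (· < l)) = #(T.filter (· < l)) := by
    rw [filter_insert, if_neg (lt_irrefl l)]
  by_cases hvl : 0 < v l
  · simp only [forall_mem_insert, hvl, true_and, hsgn, fup_bigFace_insert hl hvl, hl,
      not_false_eq_true, if_true]
  · simp [hvl, hl]

theorem cBdry_capR {N k : ℕ} {α : (Fin d → ℕ) → ℝ} (β : (Fin d → ℕ) → ℝ)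
    (hα : ∀ f, α f ≠ 0 → #(oddSet d f) = k + 1) {v : Fin d → ℕ} (hv : ∀ m, Even (v m)) :
    cBdry d N (capR d α β) v
      = (-1) ^ k * (capR d (cBdry d N α) β v - capR d α (cDelta d β) v) := by
  rw [cBdry_capR_eq_sum N α β hv, capR_cBdry_eq_sum N α β hv, capR_cDelta_eq_sum α β hv,
    ← sum_sub_distrib, mul_sum]
  refine sum_congr rfl fun l _ => ?_
  rw [← sum_sub_distrib, mul_sum]
  refine sum_congr rfl fun T _ => ?_
  by_cases hT : l ∉ T ∧ ∀ m ∈ T, 0 < v m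
  swap
  · simp [hT]
  rw [if_pos hT, if_pos hT, if_pos hT]
  obtain ⟨hl, hpos⟩ := hT
  by_cases hk : #T = k
  · rw [neg_one_pow_card_filter_gt hl, hk]
    ring
  -- Otherwise both faces carrying `α` have the wrong dimension.
  have hzero : ∀ f, #(oddSet d f) = #T + 1 → α f = 0 := fun f hf =>
    by_contra fun h => hk (by have := hα f h; omega)
  have ha : (if 0 < v l then α (bigFace d v (insert l T)) else 0) = 0 := by
    split_ifs with hvl
    · refine hzero _ ?_
      rw [oddSet_bigFace hv (forall_mem_insert .. |>.2 ⟨hvl, hpos⟩), card_insert_of_notMem hl]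
    · rfl
  have hb : (if v l < 2 * N then α (fup d (bigFace d v T) l) else 0) = 0 := by
    split_ifs
    · exact hzero _ (by rw [oddSet_fup_bigFace hv hpos hl, card_insert_of_notMem hl])
    · rfl
  rw [ha, hb]
  ring

end Leibniz

section Grid

variable {d : ℕ}

def gridFaces (d N : ℕ) : Finset (Fin d → ℕ) :=
  Fintype.piFinset fun _ => range (2 * N + 1)

lemma mem_gridFaces {N : ℕ} {f : Fin d → ℕ} : f ∈ gridFaces d N ↔ inGrid d N f := by
  simp [gridFaces, inGrid]

lemma isVertex_two_mul {N : ℕ} (w : Fin d → Fin (N + 1)) :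
    isVertex d N (fun m => 2 * (w m : ℕ)) :=
  fun m => ⟨even_two_mul _, show 2 * (w m : ℕ) ≤ 2 * N by have := (w m).isLt; omega⟩

lemma bigFace_mem_gridFaces {N : ℕ} {v : Fin d → ℕ} (hv : isVertex d N v)
    (T : Finset (Fin d)) : bigFace d v T ∈ gridFaces d N := by
  rw [mem_gridFaces]
  intro m
  have := (hv m).2
  simp only [bigFace]
  split_ifs <;> omega

/-- Every face of the grid has a unique top vertex `2w`, from which it descends in the
directions of its odd coordinates. -/
lemma sum_capR_gridVertices (N : ℕ) (α β : (Fin d → ℕ) → ℝ) :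
    ∑ w : Fin d → Fin (N + 1), capR d α β (fun m => 2 * (w m : ℕ))
      = ∑ f ∈ gridFaces d N, α f * β f := by
  rw [sum_congr rfl fun w _ => capR_eq_sum_of_even α β fun m => (isVertex_two_mul w m).1,
    ← sum_product', ← sum_filter]
  refine sum_nbij' (fun p => bigFace d (fun m => 2 * (p.1 m : ℕ)) p.2)
    (fun f => (fun m => ⟨min ((f m + 1) / 2) N, by omega⟩, oddSet d f)) ?_ ?_ ?_ ?_ ?_
  · rintro ⟨w, T⟩ -
    exact bigFace_mem_gridFaces (isVertex_two_mul w) T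
  · intro f hf
    simp only [mem_gridFaces, inGrid] at hf
    simp only [mem_filter, mem_product, mem_univ, true_and, mem_oddSet, Nat.odd_iff]
    intro m hm
    have := hf m
    omega
  · rintro ⟨w, T⟩ hwT
    simp only [mem_filter, mem_product, mem_univ, true_and] at hwT
    refine Prod.ext (funext fun m => Fin.ext ?_)
      (oddSet_bigFace (fun m => (isVertex_two_mul w m).1) hwT)
    have := (w m).isLt
    simp only [bigFace]
    split_ifs with hm
    · have := hwT m hm; omega
    · omega
  · intro f hf
    simp only [mem_gridFaces, inGrid] at hf
    funext m
    have := hf m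
    simp only [bigFace, mem_oddSet, Nat.odd_iff]
    split_ifs <;> omega
  · intro _ _
    rfl

lemma sum_odd_fup (N : ℕ) (F : (Fin d → ℕ) → (Fin d → ℕ) → ℝ) (l : Fin d) :
    ∑ f ∈ (gridFaces d N).filter (fun f => Odd (f l)), F f (fup d f l)
      = ∑ g ∈ (gridFaces d N).filter (fun g => Even (g l) ∧ 0 < g l), F (fdn d g l) g := by
  refine sum_nbij' (fup d · l) (fdn d · l) ?_ ?_ ?_ ?_ ?_ <;> intro f hf <;>
    simp only [mem_filter, mem_gridFaces, inGrid, Nat.odd_iff, Nat.even_iff] at hf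
  · simp only [mem_filter, mem_gridFaces, inGrid, Nat.even_iff, fup_apply]
    have := hf.1 l
    refine ⟨fun m => ?_, by simp; omega, by simp⟩
    have := hf.1 m
    split_ifs <;> omega
  · simp only [mem_filter, mem_gridFaces, inGrid, Nat.odd_iff, fdn_apply]
    have := hf.1 l
    refine ⟨fun m => ?_, by simp; omega⟩
    have := hf.1 m
    split_ifs <;> omega
  · exact fdn_fup f l
  · exact fup_fdn hf.2.2
  · rw [fdn_fup]

lemma sum_odd_fdn (N : ℕ) (F : (Fin d → ℕ) → (Fin d → ℕ) → ℝ) (l : Fin d) :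
    ∑ f ∈ (gridFaces d N).filter (fun f => Odd (f l)), F f (fdn d f l)
      = ∑ g ∈ (gridFaces d N).filter (fun g => Even (g l) ∧ g l < 2 * N), F (fup d g l) g := by
  refine sum_nbij' (fdn d · l) (fup d · l) ?_ ?_ ?_ ?_ ?_ <;> intro f hf <;>
    simp only [mem_filter, mem_gridFaces, inGrid, Nat.odd_iff, Nat.even_iff] at hf
  · simp only [mem_filter, mem_gridFaces, inGrid, Nat.even_iff, fdn_apply]
    have := hf.1 l
    refine ⟨fun m => ?_, by simp; omega, by simp; omega⟩
    have := hf.1 m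
    split_ifs <;> omega
  · simp only [mem_filter, mem_gridFaces, inGrid, Nat.odd_iff, fup_apply]
    have := hf.1 l
    refine ⟨fun m => ?_, by simp; omega⟩
    have := hf.1 m
    split_ifs <;> omega
  · exact fup_fdn (by omega)
  · exact fdn_fup f l
  · rw [fup_fdn (by omega)]

lemma sum_mul_cDelta (N : ℕ) (α β : (Fin d → ℕ) → ℝ) :
    ∑ f ∈ gridFaces d N, α f * cDelta d β f = ∑ f ∈ gridFaces d N, cBdry d N α f * β f := by
  simp only [cDelta, cBdry, mul_sum, sum_mul]
  rw [sum_comm, sum_comm (s := gridFaces d N)]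
  refine sum_congr rfl fun l _ => ?_
  have hlhs : ∑ f ∈ gridFaces d N, α f *
      (if Odd (f l) then csgn d f l • (β (fup d f l) - β (fdn d f l)) else 0)
      = ∑ f ∈ (gridFaces d N).filter (fun f => Odd (f l)), csgn d f l * α f * β (fup d f l)
        - ∑ f ∈ (gridFaces d N).filter (fun f => Odd (f l)), csgn d f l * α f * β (fdn d f l) := by
    rw [← sum_sub_distrib, sum_filter]
    exact sum_congr rfl fun f _ => by split_ifs <;> simp only [zsmul_eq_mul, mul_zero]; ring
  have hrhs : ∑ g ∈ gridFaces d N, (if Even (g l) then csgn d g l •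
      ((if 0 < g l then α (fdn d g l) else 0) - (if g l < 2 * N then α (fup d g l) else 0))
        else 0) * β g
      = ∑ g ∈ (gridFaces d N).filter (fun g => Even (g l) ∧ 0 < g l),
          csgn d (fdn d g l) l * α (fdn d g l) * β g
        - ∑ g ∈ (gridFaces d N).filter (fun g => Even (g l) ∧ g l < 2 * N),
          csgn d (fup d g l) l * α (fup d g l) * β g := by
    rw [sum_filter, sum_filter, ← sum_sub_distrib]
    exact sum_congr rfl fun g _ => by
      simp only [csgn_fdn, csgn_fup, zsmul_eq_mul]; split_ifs <;> simp_all; ring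
  rw [hlhs, hrhs, sum_odd_fup N (fun f g => csgn d f l * α f * β g),
    sum_odd_fdn N (fun f g => csgn d f l * α f * β g)]

end Grid

section Noether

variable {d N : ℕ}

lemma hasDerivAt_action {L : ((Fin d → ℕ) → ℝ) → (Fin d → ℕ) → ℝ}
    {p q φ : (Fin d → ℕ) → ℝ}
    (hloc : ∀ (Δ : (Fin d → ℕ) → ℝ) (v : Fin d → ℕ), isVertex d N v →
      HasDerivAt (fun t : ℝ => L (φ + t • Δ) v) (capR d p Δ v + capR d q (cDelta d Δ) v) 0)
    (Δ : (Fin d → ℕ) → ℝ) :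
    HasDerivAt (fun t : ℝ => ∑ w : Fin d → Fin (N + 1), L (φ + t • Δ) (fun m => 2 * (w m : ℕ)))
      (∑ f ∈ gridFaces d N, (p f + cBdry d N q f) * Δ f) 0 := by
  refine (HasDerivAt.fun_sum fun w _ => hloc Δ _ (isVertex_two_mul w)).congr_deriv ?_
  rw [sum_add_distrib, sum_capR_gridVertices, sum_capR_gridVertices, sum_mul_cDelta,
    ← sum_add_distrib]
  exact sum_congr rfl fun f _ => (add_mul _ _ _).symm

theorem add_cBdry_eq_zero_of_stationary {L : ((Fin d → ℕ) → ℝ) → (Fin d → ℕ) → ℝ}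
    {p q φ : (Fin d → ℕ) → ℝ}
    (hloc : ∀ (Δ : (Fin d → ℕ) → ℝ) (v : Fin d → ℕ), isVertex d N v →
      HasDerivAt (fun t : ℝ => L (φ + t • Δ) v) (capR d p Δ v + capR d q (cDelta d Δ) v) 0)
    (hshell : ∀ Δ : (Fin d → ℕ) → ℝ,
      HasDerivAt (fun t : ℝ => ∑ w : Fin d → Fin (N + 1),
        L (φ + t • Δ) (fun m => 2 * (w m : ℕ))) 0 0) :
    ∀ f ∈ gridFaces d N, p f + cBdry d N q f = 0 := by
  -- Varying the field by the left-hand side itself makes the derivative of the action a sum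
  -- of squares.
  let c := fun f => p f + cBdry d N q f
  exact (sum_mul_self_eq_zero_iff _ c).1 ((hshell c).unique (hasDerivAt_action hloc c)).symm

theorem cBdry_capR_of_add_cBdry_eq_zero {k : ℕ} {p q : (Fin d → ℕ) → ℝ}
    (hq : ∀ f, q f ≠ 0 → #(oddSet d f) = k + 1)
    (hEL : ∀ f ∈ gridFaces d N, p f + cBdry d N q f = 0) {v : Fin d → ℕ} (hv : isVertex d N v)
    (Δ : (Fin d → ℕ) → ℝ) :
    cBdry d N (capR d q Δ) v = (-1) ^ (k + 1) * (capR d p Δ v + capR d q (cDelta d Δ) v) := by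
  have heven : ∀ m, Even (v m) := fun m => (hv m).1
  have hbdry : capR d (cBdry d N q) Δ v = - capR d p Δ v := by
    rw [capR_eq_sum_of_even _ _ heven, capR_eq_sum_of_even _ _ heven, ← sum_neg_distrib]
    refine sum_congr rfl fun T _ => ?_
    rw [eq_neg_of_add_eq_zero_right (hEL _ (bigFace_mem_gridFaces hv T))]
    split_ifs <;> ring
  rw [cBdry_capR Δ hq heven, hbdry, pow_succ]
  ring

end Noether

theorem discrete_noether_general (d N k : ℕ)
    (L : ((Fin d → ℕ) → ℝ) → (Fin d → ℕ) → ℝ)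
    (P Q : ((Fin d → ℕ) → ℝ) → (Fin d → ℕ) → ℝ)
    (hQ : ∀ φ f, Q φ f ≠ 0 → (oddSet d f).card = k + 1)
    (hloc : ∀ (φ Δ : (Fin d → ℕ) → ℝ) (v : Fin d → ℕ), isVertex d N v →
      HasDerivAt (fun t : ℝ => L (φ + t • Δ) v)
        (capR d (P φ) Δ v + capR d (Q φ) (cDelta d Δ) v) 0)
    (φ : (Fin d → ℕ) → ℝ)
    (hshell : ∀ Δ' : (Fin d → ℕ) → ℝ,
      HasDerivAt (fun t : ℝ => ∑ w : Fin d → Fin (N + 1),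
        L (φ + t • Δ') (fun m => 2 * (w m : ℕ))) 0 0)
    (Δ : (Fin d → ℕ) → ℝ) :
    (∀ v : Fin d → ℕ, isVertex d N v →
        HasDerivAt (fun t : ℝ => L (φ + t • Δ) v) 0 0)
    ↔ (∀ v : Fin d → ℕ, isVertex d N v →
        cBdry d N (capR d (Q φ) Δ) v = 0) := by
  have hcurrent := fun v (hv : isVertex d N v) =>
    cBdry_capR_of_add_cBdry_eq_zero (hQ φ) (add_cBdry_eq_zero_of_stationary (hloc φ) hshell) hv Δ
  refine ⟨fun hinv v hv => ?_, fun hcons v hv => ?_⟩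
  · rw [hcurrent v hv, ← (hinv v hv).unique (hloc φ Δ v hv), mul_zero]
  · have hzero := hcons v hv
    rw [hcurrent v hv, mul_eq_zero] at hzero
    exact hzero.resolve_left (pow_ne_zero _ (by norm_num)) ▸ hloc φ Δ v hv

/-- **Discrete Noether theorem.**
Let `L` be a local Lagrangian on `k`-cochains of the grid `I^d_N`: it assigns
to each field `φ` and each vertex `v` a value `L φ v` depending differentiably
on the values of `φ` and of `δφ` at the faces with maximal vertex `v`, with
partial derivatives packaged as a `k`-cochain `P φ = ∂L[φ]/∂φ` and a
`(k+1)`-cochain `Q φ = ∂L[φ]/∂(δφ)` via the directional-derivative identity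
`(d/dt) L[φ+tΔ](v)|₀ = [P φ ⌢ Δ](v) + [Q φ ⌢ δΔ](v)` (`hloc`), where `⌢` at a
vertex is `[α⌢β](v) = Σ_{f : max f = v} α(f) β(f)`.
Let `φ` be on shell, i.e. stationary for the action `εL[φ]` (the sum of
`L[φ]` over all vertices of the grid).  Then, for a `k`-cochain `Δ`, the
Lagrangian is invariant under the infinitesimal transformation `Δ` — i.e.
`(d/dt) L[φ+tΔ]|_{t=0} = 0` as a function on vertices — if and only if the
current `j[φ] = (∂L[φ]/∂(δφ)) ⌢ Δ` satisfies `∂ j[φ] = 0`. -/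
theorem discrete_noether (d N k : ℕ)
    (L : ((Fin d → ℕ) → ℝ) → (Fin d → ℕ) → ℝ)
    (P Q : ((Fin d → ℕ) → ℝ) → (Fin d → ℕ) → ℝ)
    (hP : ∀ φ f, P φ f ≠ 0 → (oddSet d f).card = k)
    (hQ : ∀ φ f, Q φ f ≠ 0 → (oddSet d f).card = k + 1)
    (hloc : ∀ (φ Δ : (Fin d → ℕ) → ℝ) (v : Fin d → ℕ), isVertex d N v →
      HasDerivAt (fun t : ℝ => L (φ + t • Δ) v)
        (capR d (P φ) Δ v + capR d (Q φ) (cDelta d Δ) v) 0)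
    (φ : (Fin d → ℕ) → ℝ)
    (hφ : ∀ f, φ f ≠ 0 → (oddSet d f).card = k)
    (hshell : ∀ Δ' : (Fin d → ℕ) → ℝ,
      HasDerivAt (fun t : ℝ => ∑ w : Fin d → Fin (N + 1),
        L (φ + t • Δ') (fun m => 2 * (w m : ℕ))) 0 0)
    (Δ : (Fin d → ℕ) → ℝ)
    (hΔ : ∀ f, Δ f ≠ 0 → (oddSet d f).card = k) :
    (∀ v : Fin d → ℕ, isVertex d N v →
        HasDerivAt (fun t : ℝ => L (φ + t • Δ) v) 0 0)
    ↔ (∀ v : Fin d → ℕ, isVertex d N v →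
        cBdry d N (capR d (Q φ) Δ) v = 0) :=
  discrete_noether_general d N k L P Q hQ hloc φ hshell Δ
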